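/- Tree model property: Let Ĉ be a concept and T̂ a TBox of ALCF^P(Z_c) such that Ĉ and, for each axiom C ⊑ D ∈ T̂, the concept ¬C ⊔ D, are in negation normal form (negation occurs only immediately in front of concept names, using the connectives ⊔, ∀r.C, ∀P.⟦Θ⟧ via the abbreviations). Let d be the maximum of |P| over all occurrences of subconcepts of the form ∃P.⟦Θ⟧ in these concepts, and let e be the total number of occurrences of subconcepts of the form ∃r.C or ∃P.⟦Θ⟧ in them; assume d ≥ 1 and e ≥ 1, and set n = d·e. If Ĉ is satisfiable with respect to T̂, then there is an n-tree interpretation I that is a model of T̂ with Ĉ^I ≠ ∅. -/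

import Mathlib

/-!
Unravel a model `J` of the TBox, starting from an element of `Ĉ^J`. Every existential subconcept
satisfied at an element of `J` gets one chosen witnessing run: a role path of length at most `d`
together with a chain realizing it in `J`. A tree node copies an element of `J` and carries the
runs that still have to be reproduced below it: the at most `e` fresh witnessing runs of its
element, plus the unfinished tails of its parent's runs. A run started `k` levels up has at most
`d - k` steps left, so a node carries runs with at most `e * d` distinct first steps, and the
`γ`-th child follows the `γ`-th of them. Distinct first steps along the same functional role
would lead to distinct successors in `J`, which cannot exist, so the tree interprets functional
roles functionally. Surplus children are attached through a fresh non-functional role that no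
concept mentions. Concept names, registers and edges are copied from `J`, so universal
constraints transfer along the map to `J`, and existential ones because every witnessing run is
reproduced in the tree.
-/

namespace ALCFPZ

/-! Syntax of ALCF^P(Z_c).  Concept names, role names and registers are natural
numbers; the functional role names are the even role names. -/

/-- Constraints.  `eqT i x j y` is `S^i x = S^j y`, `ltT i x j y` is
`S^i x < S^j y`, and `eqC i x c` is `S^i x = c`. -/
inductive Constr where
  | eqT : ℕ → ℕ → ℕ → ℕ → Constr
  | ltT : ℕ → ℕ → ℕ → ℕ → Constr
  | eqC : ℕ → ℕ → ℤ → Constr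
  | not : Constr → Constr
  | and : Constr → Constr → Constr
  | or : Constr → Constr → Constr
deriving DecidableEq

/-- The depth of a constraint: the maximal `d` such that `S^d x` occurs in it. -/
def Constr.depth : Constr → ℕ
  | .eqT i _ j _ => max i j
  | .ltT i _ j _ => max i j
  | .eqC i _ _ => i
  | .not θ => θ.depth
  | .and θ₁ θ₂ => max θ₁.depth θ₂.depth
  | .or θ₁ θ₂ => max θ₁.depth θ₂.depth

/-- Concepts.  `atom A` is a concept name, `inter` is `⊓`, `ex r C` is `∃r.C`,
and `exP P θ` is the path constraint `∃P.⟦θ⟧`. -/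
inductive Concept where
  | atom : ℕ → Concept
  | neg : Concept → Concept
  | inter : Concept → Concept → Concept
  | ex : ℕ → Concept → Concept
  | exP : List ℕ → Constr → Concept
deriving DecidableEq

/-- `C ⊔ D` as the abbreviation `¬(¬C ⊓ ¬D)`. -/
def Concept.or' (C D : Concept) : Concept := .neg (.inter (.neg C) (.neg D))

/-- Well-formedness: in every path constraint `∃P.⟦θ⟧` the depth of `θ` is at
most `|P|`. -/
def Concept.wf : Concept → Prop
  | .atom _ => True
  | .neg C => C.wf
  | .inter C D => C.wf ∧ D.wf
  | .ex _ C => C.wf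
  | .exP P θ => θ.depth ≤ P.length

/-- An interpretation with domain `Δ`: interpretations of concept names, role
names (with the even, i.e. functional, role names interpreted functionally), and
a register function assigning integers. -/
structure Interp (Δ : Type) where
  conc : ℕ → Set Δ
  role : ℕ → Δ → Δ → Prop
  reg : Δ → ℕ → ℤ
  func : ∀ r : ℕ, r % 2 = 0 → ∀ v v' v'' : Δ, role r v v' → role r v v'' → v' = v''

variable {Δ : Type}

/-- Satisfaction of a constraint by a tuple `σ 0, σ 1, …` of domain elements. -/
def Constr.sat (I : Interp Δ) (σ : ℕ → Δ) : Constr → Prop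
  | .eqT i x j y => I.reg (σ i) x = I.reg (σ j) y
  | .ltT i x j y => I.reg (σ i) x < I.reg (σ j) y
  | .eqC i x c => I.reg (σ i) x = c
  | .not θ => ¬ θ.sat I σ
  | .and θ₁ θ₂ => θ₁.sat I σ ∧ θ₂.sat I σ
  | .or θ₁ θ₂ => θ₁.sat I σ ∨ θ₂.sat I σ

/-- `(σ 0, …, σ |P|) ∈ P^I` : consecutive elements are related by the
corresponding roles of the role path `P`. -/
def chainOf (I : Interp Δ) (P : List ℕ) (σ : ℕ → Δ) : Prop :=
  ∀ (i : ℕ) (h : i < P.length), I.role (P.get ⟨i, h⟩) (σ i) (σ (i + 1))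

/-- The semantics of concepts. -/
def Concept.sem (I : Interp Δ) : Concept → Set Δ
  | .atom A => I.conc A
  | .neg C => (C.sem I)ᶜ
  | .inter C D => C.sem I ∩ D.sem I
  | .ex r C => {v | ∃ v', I.role r v v' ∧ v' ∈ C.sem I}
  | .exP P θ => {u | ∃ σ : ℕ → Δ, σ 0 = u ∧ chainOf I P σ ∧ θ.sat I σ}

/-- A TBox: a finite list of axioms `C ⊑ D`. -/
abbrev TBox := List (Concept × Concept)

/-- `I` is a model of the TBox `T`. -/
def IsModel (I : Interp Δ) (T : TBox) : Prop :=
  ∀ ax ∈ T, (ax.1.sem I : Set Δ) ⊆ ax.2.sem I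

/-- `C` is satisfiable with respect to the TBox `T`. -/
def Satisfiable (C : Concept) (T : TBox) : Prop :=
  ∃ (Δ' : Type) (_ : Nonempty Δ') (I : Interp Δ'), IsModel I T ∧ (Concept.sem I C).Nonempty

/-- An interpretation with domain `[n]*` is an `n`-tree interpretation:
two nodes are related by some role iff the second is a child of the first. -/
def IsTree (n : ℕ) (I : Interp (List (Fin n))) : Prop :=
  ∀ u v : List (Fin n), (∃ r : ℕ, I.role r u v) ↔ ∃ γ : Fin n, v = u ++ [γ]

/-- Negation normal form: negation occurs only immediately in front of concept
names, via the connectives `⊓`, `⊔`, `∃r`, `∀r`, `∃P.⟦·⟧`, `∀P.⟦·⟧` (the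
universal connectives being the usual abbreviations). -/
inductive Concept.IsNNF : Concept → Prop
  | atom (A : ℕ) : IsNNF (.atom A)
  | negAtom (A : ℕ) : IsNNF (.neg (.atom A))
  | inter {C D : Concept} : IsNNF C → IsNNF D → IsNNF (.inter C D)
  | or {C D : Concept} : IsNNF C → IsNNF D → IsNNF (.neg (.inter (.neg C) (.neg D)))
  | ex {C : Concept} (r : ℕ) : IsNNF C → IsNNF (.ex r C)
  | all {C : Concept} (r : ℕ) : IsNNF C → IsNNF (.neg (.ex r (.neg C)))
  | exP (P : List ℕ) (θ : Constr) : IsNNF (.exP P θ)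
  | allP (P : List ℕ) (θ : Constr) : IsNNF (.neg (.exP P (.not θ)))

/-- The maximal length `|P|` over all occurrences of subconcepts `∃P.⟦θ⟧`. -/
def Concept.maxPathLen : Concept → ℕ
  | .atom _ => 0
  | .neg C => C.maxPathLen
  | .inter C D => max C.maxPathLen D.maxPathLen
  | .ex _ C => C.maxPathLen
  | .exP P _ => P.length

/-- The number of occurrences of existentially quantified subconcepts
`∃r.C` or `∃P.⟦θ⟧`. -/
def Concept.numEx : Concept → ℕ
  | .atom _ => 0
  | .neg C => C.numEx
  | .inter C D => C.numEx + D.numEx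
  | .ex _ C => C.numEx + 1
  | .exP _ _ => 1


section Semantics

variable {Δ Δ' : Type}

theorem Constr.sat_congr (I : Interp Δ) {θ : Constr} {σ σ' : ℕ → Δ}
    (h : ∀ i ≤ θ.depth, σ i = σ' i) : θ.sat I σ ↔ θ.sat I σ' := by
  induction θ with
  | eqT i x j y | ltT i x j y =>
    simp only [Constr.sat, h i (le_max_left i j), h j (le_max_right i j)]
  | eqC i x c => simp only [Constr.sat, h i le_rfl]
  | not θ ih => exact not_congr (ih h)
  | and θ₁ θ₂ ih₁ ih₂ | or θ₁ θ₂ ih₁ ih₂ =>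
    simp only [Constr.sat, ih₁ fun i hi => h i (hi.trans (le_max_left _ _)),
      ih₂ fun i hi => h i (hi.trans (le_max_right _ _))]

theorem Constr.sat_comp (I : Interp Δ) (J : Interp Δ') (f : Δ → Δ')
    (hf : ∀ v x, I.reg v x = J.reg (f v) x) (θ : Constr) (σ : ℕ → Δ) :
    θ.sat I σ ↔ θ.sat J (f ∘ σ) := by
  induction θ <;> simp only [Constr.sat, Function.comp_apply, *]

theorem chainOf_cons (I : Interp Δ) (r : ℕ) (P : List ℕ) (σ : ℕ → Δ) :
    chainOf I (r :: P) σ ↔ I.role r (σ 0) (σ 1) ∧ chainOf I P (fun i => σ (i + 1)) := by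
  constructor
  · intro h
    exact ⟨h 0 (by simp), fun i hi => h (i + 1) (by simpa using hi)⟩
  · rintro ⟨h0, h⟩ (_ | i) hi
    exacts [h0, h i (by simpa using hi)]

theorem chainOf_comp {I : Interp Δ} {J : Interp Δ'} {f : Δ → Δ'} {P : List ℕ}
    {σ : ℕ → Δ}
    (hf : ∀ r ∈ P, ∀ u v, I.role r u v → J.role r (f u) (f v)) (h : chainOf I P σ) :
    chainOf J P (f ∘ σ) :=
  fun i hi => hf _ (List.getElem_mem hi) _ _ (h i hi)

theorem isModel_iff (I : Interp Δ) (T : TBox) :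
    IsModel I T ↔ ∀ ax ∈ T, ∀ v, v ∈ (Concept.or' (.neg ax.1) ax.2).sem I := by
  simp only [IsModel, Concept.or', Concept.sem, Set.subset_def, Set.mem_compl_iff,
    Set.mem_inter_iff, not_and, not_not]

def Concept.roles : Concept → List ℕ
  | .atom _ => []
  | .neg C => C.roles
  | .inter C D => C.roles ++ D.roles
  | .ex r C => r :: C.roles
  | .exP P _ => P

end Semantics

structure Run (Δ : Type) where
  path : List ℕ
  pos : ℕ → Δ

namespace Run

variable {Δ : Type}

def Valid (J : Interp Δ) (w : Δ) (ρ : Run Δ) : Prop :=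
  ρ.pos 0 = w ∧ chainOf J ρ.path ρ.pos

def firstStep (ρ : Run Δ) : Option (ℕ × Δ) :=
  ρ.path.head?.map fun r => (r, ρ.pos 1)

def tail (ρ : Run Δ) : Run Δ :=
  ⟨ρ.path.tail, fun i => ρ.pos (i + 1)⟩

theorem isSome_firstStep (ρ : Run Δ) : ρ.firstStep.isSome = decide (0 < ρ.path.length) := by
  rcases ρ with ⟨_ | ⟨r, P⟩, σ⟩ <;> simp [firstStep]

theorem Valid.of_firstStep_eq_some {J : Interp Δ} {w : Δ} {ρ : Run Δ} {a : ℕ × Δ}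
    (hρ : ρ.Valid J w) (ha : ρ.firstStep = some a) :
    J.role a.1 w a.2 ∧ ρ.tail.Valid J a.2 := by
  rcases ρ with ⟨_ | ⟨r, P⟩, σ⟩
  · simp [firstStep] at ha
  · obtain rfl : (r, σ 1) = a := by simpa [firstStep] using ha
    obtain ⟨rfl, hchain⟩ := hρ
    rw [chainOf_cons] at hchain
    exact ⟨hchain.1, rfl, hchain.2⟩

end Run

section WitnessRuns

variable {Δ : Type}

open Classical in
noncomputable def witnessRuns (J : Interp Δ) (w : Δ) : Concept → List (Run Δ)
  | .atom _ => []
  | .neg C => witnessRuns J w C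
  | .inter C D => witnessRuns J w C ++ witnessRuns J w D
  | .ex r C =>
    (if h : ∃ v, J.role r w v ∧ v ∈ C.sem J then
      [⟨[r], fun i => if i = 0 then w else h.choose⟩] else []) ++ witnessRuns J w C
  | .exP P θ =>
    if h : ∃ σ : ℕ → Δ, σ 0 = w ∧ chainOf J P σ ∧ θ.sat J σ then
      [⟨P, h.choose⟩] else []

variable (J : Interp Δ) (w : Δ)

theorem length_witnessRuns_le (E : Concept) : (witnessRuns J w E).length ≤ E.numEx := by
  induction E with
  | atom => simp [witnessRuns, Concept.numEx]
  | neg C ih => exact ih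
  | inter C D ihC ihD => simpa [witnessRuns, Concept.numEx] using add_le_add ihC ihD
  | ex r C ih =>
    simp only [witnessRuns, Concept.numEx, List.length_append]
    split <;> simp <;> omega
  | exP P θ =>
    simp only [witnessRuns, Concept.numEx]
    split <;> simp

theorem valid_and_length_le_of_mem_witnessRuns {E : Concept} {ρ : Run Δ}
    (hρ : ρ ∈ witnessRuns J w E) :
    ρ.Valid J w ∧ ρ.path.length ≤ max 1 E.maxPathLen := by
  induction E with
  | atom => simp [witnessRuns] at hρ
  | neg C ih => exact ih hρ
  | inter C D ihC ihD =>
    rcases List.mem_append.1 hρ with h | h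
    · exact (ihC h).imp_right fun h => h.trans (max_le_max_left 1 (le_max_left _ _))
    · exact (ihD h).imp_right fun h => h.trans (max_le_max_left 1 (le_max_right _ _))
  | ex r C ih =>
    rcases List.mem_append.1 hρ with h | h
    · split at h
      · next hex =>
        obtain rfl := List.mem_singleton.1 h
        exact ⟨⟨rfl, (chainOf_cons _ _ _ _).2 ⟨hex.choose_spec.1, nofun⟩⟩, by simp⟩
      · simp at h
    · exact ih h
  | exP P θ =>
    simp only [witnessRuns] at hρ
    split at hρ
    · next hex =>
      obtain rfl := List.mem_singleton.1 hρ
      exact ⟨⟨hex.choose_spec.1, hex.choose_spec.2.1⟩, le_max_right _ _⟩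
    · simp at hρ

theorem exists_mem_witnessRuns_ex {r : ℕ} {C : Concept}
    (h : ∃ v, J.role r w v ∧ v ∈ C.sem J) :
    ∃ ρ ∈ witnessRuns J w (.ex r C), ρ.path = [r] ∧ ρ.pos 1 ∈ C.sem J := by
  refine ⟨⟨[r], fun i => if i = 0 then w else h.choose⟩, ?_, rfl, h.choose_spec.2⟩
  rw [witnessRuns, dif_pos h]
  exact List.mem_append_left _ (List.mem_singleton_self _)

theorem exists_mem_witnessRuns_exP {P : List ℕ} {θ : Constr}
    (h : ∃ σ : ℕ → Δ, σ 0 = w ∧ chainOf J P σ ∧ θ.sat J σ) :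
    ∃ ρ ∈ witnessRuns J w (.exP P θ), ρ.path = P ∧ θ.sat J ρ.pos := by
  refine ⟨⟨P, h.choose⟩, ?_, rfl, h.choose_spec.2.2⟩
  rw [witnessRuns, dif_pos h]
  exact List.mem_singleton_self _

end WitnessRuns

structure Node (Δ : Type) where
  elem : Δ
  pending : List (Run Δ)

section Unravelling

open Classical

variable {Δ : Type} (J : Interp Δ) (R : Δ → List (Run Δ))

def nodeRuns (s : Node Δ) : List (Run Δ) := R s.elem ++ s.pending

noncomputable def nodeSteps (s : Node Δ) : List (ℕ × Δ) :=
  ((nodeRuns R s).filterMap Run.firstStep).dedup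

noncomputable def advance (s : Node Δ) (a : ℕ × Δ) : Node Δ :=
  ⟨a.2, ((nodeRuns R s).filter (·.firstStep = some a)).map Run.tail⟩

noncomputable def childNode (s : Node Δ) (γ : ℕ) : Node Δ :=
  if h : γ < (nodeSteps R s).length then advance R s (nodeSteps R s)[γ] else ⟨s.elem, []⟩

noncomputable def edgeLabel (rstar : ℕ) (s : Node Δ) (γ : ℕ) : ℕ :=
  if h : γ < (nodeSteps R s).length then (nodeSteps R s)[γ].1 else rstar

noncomputable def nodeAt (w₀ : Δ) {n : ℕ} (v : List (Fin n)) : Node Δ :=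
  v.foldl (fun s γ => childNode R s γ) ⟨w₀, []⟩

theorem nodeAt_append_singleton (w₀ : Δ) {n : ℕ} (v : List (Fin n)) (γ : Fin n) :
    nodeAt R w₀ (v ++ [γ]) = childNode R (nodeAt R w₀ v) γ := by
  simp [nodeAt, List.foldl_append]

def Node.WellFormed (s : Node Δ) : Prop := ∀ ρ ∈ s.pending, ρ.Valid J s.elem

variable {J R}

theorem Node.WellFormed.valid_of_mem_nodeRuns (hR : ∀ w, ∀ ρ ∈ R w, ρ.Valid J w)
    {s : Node Δ} (hs : s.WellFormed J) {ρ : Run Δ} (hρ : ρ ∈ nodeRuns R s) :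
    ρ.Valid J s.elem :=
  (List.mem_append.1 hρ).elim (hR _ _) (hs _)

theorem Node.WellFormed.role_of_mem_nodeSteps (hR : ∀ w, ∀ ρ ∈ R w, ρ.Valid J w)
    {s : Node Δ} (hs : s.WellFormed J) {a : ℕ × Δ} (ha : a ∈ nodeSteps R s) :
    J.role a.1 s.elem a.2 := by
  obtain ⟨ρ, hρ, ha⟩ := List.mem_filterMap.1 (List.mem_dedup.1 ha)
  exact ((hs.valid_of_mem_nodeRuns hR hρ).of_firstStep_eq_some ha).1

theorem Node.WellFormed.childNode (hR : ∀ w, ∀ ρ ∈ R w, ρ.Valid J w)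
    {s : Node Δ} (hs : s.WellFormed J) (γ : ℕ) : (childNode R s γ).WellFormed J := by
  unfold ALCFPZ.childNode
  split
  · intro ρ hρ
    obtain ⟨ρ', hρ', rfl⟩ := List.mem_map.1 hρ
    obtain ⟨hρ', ha⟩ := List.mem_filter.1 hρ'
    exact ((hs.valid_of_mem_nodeRuns hR hρ').of_firstStep_eq_some (of_decide_eq_true ha)).2
  · simp [Node.WellFormed]

theorem wellFormed_nodeAt (hR : ∀ w, ∀ ρ ∈ R w, ρ.Valid J w) (w₀ : Δ) {n : ℕ}
    (v : List (Fin n)) : (nodeAt R w₀ v).WellFormed J := by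
  induction v using List.reverseRecOn with
  | nil => simp [Node.WellFormed, nodeAt]
  | append_singleton v γ ih => rw [nodeAt_append_singleton]; exact ih.childNode hR γ

theorem eq_of_edgeLabel_eq_of_even (hR : ∀ w, ∀ ρ ∈ R w, ρ.Valid J w) {s : Node Δ}
    (hs : s.WellFormed J) {rstar r γ₁ γ₂ : ℕ} (hodd : rstar % 2 = 1) (hr : r % 2 = 0)
    (h₁ : edgeLabel R rstar s γ₁ = r) (h₂ : edgeLabel R rstar s γ₂ = r) :
    γ₁ = γ₂ := by
  unfold edgeLabel at h₁ h₂
  split at h₁ <;> split at h₂ <;> try omega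
  next hγ₁ hγ₂ =>
  have hw₁ := hs.role_of_mem_nodeSteps hR (List.getElem_mem hγ₁)
  have hw₂ := hs.role_of_mem_nodeSteps hR (List.getElem_mem hγ₂)
  rw [h₁] at hw₁
  rw [h₂] at hw₂
  exact ((List.nodup_dedup _).getElem_inj_iff).1
    (Prod.ext (h₁.trans h₂.symm) (J.func r hr _ _ _ hw₁ hw₂))

theorem role_of_edgeLabel (hR : ∀ w, ∀ ρ ∈ R w, ρ.Valid J w) {s : Node Δ}
    (hs : s.WellFormed J) {rstar r γ : ℕ} (hr : r ≠ rstar) (h : edgeLabel R rstar s γ = r) :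
    J.role r s.elem (childNode R s γ).elem := by
  unfold edgeLabel at h
  unfold ALCFPZ.childNode
  split at h
  next hγ =>
    rw [dif_pos hγ, ← h]
    exact hs.role_of_mem_nodeSteps hR (List.getElem_mem hγ)
  next => exact absurd h.symm hr

end Unravelling

section Counting

variable {Δ : Type}

def Node.Bounded (d e : ℕ) (s : Node Δ) : Prop :=
  ∀ j, 1 ≤ j → s.pending.countP (fun ρ => j ≤ ρ.path.length) ≤ e * (d - j)

variable {R : Δ → List (Run Δ)} {d e : ℕ}

theorem Node.Bounded.countP_nodeRuns_le (hRlen : ∀ w, (R w).length ≤ e)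
    (hRpath : ∀ w, ∀ ρ ∈ R w, ρ.path.length ≤ d) {s : Node Δ} (hs : s.Bounded d e)
    (j : ℕ) :
    (nodeRuns R s).countP (fun ρ => j < ρ.path.length) ≤ e * (d - j) := by
  have hpending : s.pending.countP (fun ρ => j < ρ.path.length) ≤ e * (d - (j + 1)) :=
    hs (j + 1) (by omega)
  rw [nodeRuns, List.countP_append]
  rcases lt_or_ge j d with hj | hj
  · have hfresh : (R s.elem).countP (fun ρ => j < ρ.path.length) ≤ e :=
      List.countP_le_length.trans (hRlen s.elem)
    rw [show d - j = d - (j + 1) + 1 by omega, mul_add_one]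
    omega
  · have hfresh : (R s.elem).countP (fun ρ => j < ρ.path.length) = 0 :=
      List.countP_eq_zero.2 fun ρ hρ h => by
        have := hRpath _ ρ hρ
        simp only [decide_eq_true_eq] at h
        omega
    rw [show d - (j + 1) = 0 by omega] at hpending
    rw [hfresh, Nat.sub_eq_zero_of_le hj]
    simpa using hpending

theorem Node.Bounded.length_nodeSteps_le (hRlen : ∀ w, (R w).length ≤ e)
    (hRpath : ∀ w, ∀ ρ ∈ R w, ρ.path.length ≤ d) {s : Node Δ} (hs : s.Bounded d e) :
    (nodeSteps R s).length ≤ e * d := by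
  classical
  calc (nodeSteps R s).length ≤ ((nodeRuns R s).filterMap Run.firstStep).length :=
        (List.dedup_sublist _).length_le
    _ = (nodeRuns R s).countP (fun ρ => 0 < ρ.path.length) := by
        simp only [List.length_filterMap_eq_countP, Run.isSome_firstStep]
    _ ≤ e * (d - 0) := hs.countP_nodeRuns_le hRlen hRpath 0
    _ = e * d := rfl

theorem Node.Bounded.childNode (hRlen : ∀ w, (R w).length ≤ e)
    (hRpath : ∀ w, ∀ ρ ∈ R w, ρ.path.length ≤ d) {s : Node Δ} (hs : s.Bounded d e)
    (γ : ℕ) :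
    (childNode R s γ).Bounded d e := by
  unfold ALCFPZ.childNode
  split
  · intro j hj
    simp only [advance, List.countP_map, List.countP_filter]
    refine (List.countP_mono_left fun ρ _ h => ?_).trans (hs.countP_nodeRuns_le hRlen hRpath j)
    simp only [Function.comp_apply, Run.tail, List.length_tail, Bool.and_eq_true,
      decide_eq_true_eq] at h ⊢
    omega
  · simp [Node.Bounded]

theorem length_nodeSteps_nodeAt_le (hRlen : ∀ w, (R w).length ≤ e)
    (hRpath : ∀ w, ∀ ρ ∈ R w, ρ.path.length ≤ d) (w₀ : Δ) {n : ℕ}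
    (v : List (Fin n)) :
    (nodeSteps R (nodeAt R w₀ v)).length ≤ e * d := by
  suffices (nodeAt R w₀ v).Bounded d e from this.length_nodeSteps_le hRlen hRpath
  induction v using List.reverseRecOn with
  | nil => simp [Node.Bounded, nodeAt]
  | append_singleton v γ ih =>
    rw [nodeAt_append_singleton]
    exact ih.childNode hRlen hRpath γ

end Counting

section TreeInterpretation

open Classical

variable {Δ : Type} (J : Interp Δ) (R : Δ → List (Run Δ)) (w₀ : Δ) (n rstar : ℕ)
  (hR : ∀ w, ∀ ρ ∈ R w, ρ.Valid J w) (hodd : rstar % 2 = 1)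

noncomputable def unravel : Interp (List (Fin n)) where
  conc A := {v | (nodeAt R w₀ v).elem ∈ J.conc A}
  role r u v := ∃ γ : Fin n, v = u ++ [γ] ∧ edgeLabel R rstar (nodeAt R w₀ u) γ = r
  reg v := J.reg (nodeAt R w₀ v).elem
  func := by
    rintro r hr u _ _ ⟨γ₁, rfl, h₁⟩ ⟨γ₂, rfl, h₂⟩
    rw [Fin.val_injective
      (eq_of_edgeLabel_eq_of_even hR (wellFormed_nodeAt hR w₀ u) hodd hr h₁ h₂)]

local notation "𝒰" => unravel J R w₀ n rstar hR hodd

theorem isTree_unravel : IsTree n 𝒰 := by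
  intro u v
  constructor
  · rintro ⟨r, γ, rfl, -⟩
    exact ⟨γ, rfl⟩
  · rintro ⟨γ, rfl⟩
    exact ⟨_, γ, rfl, rfl⟩

variable {J R w₀ n rstar}

theorem role_of_role_unravel {r : ℕ} {u u' : List (Fin n)} (hr : r ≠ rstar)
    (h : (𝒰).role r u u') :
    J.role r (nodeAt R w₀ u).elem (nodeAt R w₀ u').elem := by
  obtain ⟨γ, rfl, hγ⟩ := h
  rw [nodeAt_append_singleton]
  exact role_of_edgeLabel hR (wellFormed_nodeAt hR w₀ u) hr hγ

theorem exists_chainOf_unravel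
    (hsteps : ∀ v : List (Fin n), (nodeSteps R (nodeAt R w₀ v)).length ≤ n)
    {v : List (Fin n)} {ρ : Run Δ} (hρ : ρ ∈ nodeRuns R (nodeAt R w₀ v)) :
    ∃ g : ℕ → List (Fin n), g 0 = v ∧ chainOf 𝒰 ρ.path g ∧
      ∀ i ≤ ρ.path.length, (nodeAt R w₀ (g i)).elem = ρ.pos i := by
  obtain ⟨P, σ⟩ := ρ
  have hσ0 : (nodeAt R w₀ v).elem = σ 0 :=
    ((wellFormed_nodeAt hR w₀ v).valid_of_mem_nodeRuns hR hρ).1.symm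
  induction P generalizing v σ with
  | nil =>
    refine ⟨fun _ => v, rfl, nofun, fun i hi => ?_⟩
    obtain rfl : i = 0 := by simpa using hi
    exact hσ0
  | cons r P ih =>
    set a : ℕ × Δ := (r, σ 1)
    have ha : a ∈ nodeSteps R (nodeAt R w₀ v) :=
      List.mem_dedup.2 (List.mem_filterMap.2 ⟨_, hρ, rfl⟩)
    have hγ := List.idxOf_lt_length_iff.2 ha
    set γ : Fin n := ⟨_, hγ.trans_le (hsteps v)⟩
    have hchild : nodeAt R w₀ (v ++ [γ]) = advance R (nodeAt R w₀ v) a := by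
      rw [nodeAt_append_singleton, childNode, dif_pos hγ, List.getElem_idxOf]
    have hlabel : edgeLabel R rstar (nodeAt R w₀ v) γ = r := by
      rw [edgeLabel, dif_pos hγ, List.getElem_idxOf]
    have htail : ⟨P, fun i => σ (i + 1)⟩ ∈ nodeRuns R (nodeAt R w₀ (v ++ [γ])) := by
      rw [hchild]
      refine List.mem_append_right _ (List.mem_map.2 ⟨⟨r :: P, σ⟩, ?_, rfl⟩)
      exact List.mem_filter.2 ⟨hρ, by simp [Run.firstStep, a]⟩
    obtain ⟨g, hg0, hgchain, hgpos⟩ := ih _ htail (by rw [hchild]; rfl)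
    refine ⟨fun | 0 => v | i + 1 => g i, rfl, (chainOf_cons _ _ _ _).2 ⟨?_, hgchain⟩, ?_⟩
    · exact ⟨γ, by simpa using hg0, hlabel⟩
    · rintro (_ | i) hi
      exacts [hσ0, hgpos i (by simpa using hi)]

theorem mem_sem_exP_unravel
    (hsteps : ∀ v : List (Fin n), (nodeSteps R (nodeAt R w₀ v)).length ≤ n)
    {P : List ℕ} {θ : Constr} (hwf : θ.depth ≤ P.length)
    (hsub : ∀ w, witnessRuns J w (.exP P θ) ⊆ R w) {v : List (Fin n)}
    (hv : (nodeAt R w₀ v).elem ∈ (Concept.exP P θ).sem J) :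
    v ∈ (Concept.exP P θ).sem 𝒰 := by
  obtain ⟨ρ, hρ, rfl, hsat⟩ := exists_mem_witnessRuns_exP J _ hv
  obtain ⟨g, hg0, hchain, hpos⟩ :=
    exists_chainOf_unravel hR hodd hsteps (List.mem_append_left _ (hsub _ hρ))
  refine ⟨g, hg0, hchain, (Constr.sat_comp 𝒰 J _ (fun _ _ => rfl) θ g).2 ?_⟩
  exact (Constr.sat_congr J fun i hi => hpos i (hi.trans hwf)).2 hsat

theorem mem_sem_allP_unravel {P : List ℕ} {θ : Constr} (hfresh : rstar ∉ P) {v : List (Fin n)}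
    (hv : (nodeAt R w₀ v).elem ∈ (Concept.neg (.exP P (.not θ))).sem J) :
    v ∈ (Concept.neg (.exP P (.not θ))).sem 𝒰 := by
  rintro ⟨g, rfl, hchain, hsat⟩
  refine hv ⟨_, rfl, chainOf_comp (fun r hr _ _ => ?_) hchain,
    fun h => hsat ((Constr.sat_comp 𝒰 J _ (fun _ _ => rfl) θ g).2 h)⟩
  exact role_of_role_unravel hR hodd (ne_of_mem_of_not_mem hr hfresh)

theorem mem_sem_unravel
    (hsteps : ∀ v : List (Fin n), (nodeSteps R (nodeAt R w₀ v)).length ≤ n)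
    {E : Concept} (hnnf : E.IsNNF) (hwf : E.wf) (hfresh : rstar ∉ E.roles)
    (hsub : ∀ w, witnessRuns J w E ⊆ R w) {v : List (Fin n)}
    (hv : (nodeAt R w₀ v).elem ∈ E.sem J) : v ∈ E.sem 𝒰 := by
  induction hnnf generalizing v with
  | atom A | negAtom A => exact hv
  | inter _ _ ihC ihD =>
    exact ⟨ihC hwf.1 (fun h => hfresh (List.mem_append_left _ h))
        (fun w => List.Subset.trans (List.subset_append_left _ _) (hsub w)) hv.1,
      ihD hwf.2 (fun h => hfresh (List.mem_append_right _ h))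
        (fun w => List.Subset.trans (List.subset_append_right _ _) (hsub w)) hv.2⟩
  | or _ _ ihC ihD =>
    rintro ⟨hvC, hvD⟩
    refine hv ⟨fun h => hvC ?_, fun h => hvD ?_⟩
    · exact ihC hwf.1 (fun h => hfresh (List.mem_append_left _ h))
        (fun w => List.Subset.trans (List.subset_append_left _ _) (hsub w)) h
    · exact ihD hwf.2 (fun h => hfresh (List.mem_append_right _ h))
        (fun w => List.Subset.trans (List.subset_append_right _ _) (hsub w)) h
  | ex r _ ihC =>
    obtain ⟨ρ, hρ, hpath, hρC⟩ := exists_mem_witnessRuns_ex J _ hv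
    obtain ⟨g, rfl, hchain, hpos⟩ :=
      exists_chainOf_unravel hR hodd hsteps (List.mem_append_left _ (hsub _ hρ))
    rw [hpath, chainOf_cons] at hchain
    refine ⟨g 1, hchain.1, ihC hwf (fun h => hfresh (List.mem_cons_of_mem _ h))
      (fun w => List.Subset.trans (List.subset_append_right _ _) (hsub w)) ?_⟩
    rwa [hpos 1 (by simp [hpath])]
  | all r _ ihC =>
    rintro ⟨u, hu, huC⟩
    refine hv ⟨_, role_of_role_unravel hR hodd (fun h => hfresh (h ▸ List.mem_cons_self)) hu,
      fun h => huC (ihC hwf (fun h => hfresh (List.mem_cons_of_mem _ h))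
        (fun w => List.Subset.trans (List.subset_append_right _ _) (hsub w)) h)⟩
  | exP P θ => exact mem_sem_exP_unravel hR hodd hsteps hwf hsub hv
  | allP P θ => exact mem_sem_allP_unravel hR hodd hfresh hv

end TreeInterpretation

theorem exists_isTree_unravelling {Δ : Type} (J : Interp Δ) (Cs : List Concept)
    (hnnf : ∀ E ∈ Cs, E.IsNNF) (hwf : ∀ E ∈ Cs, E.wf) {d e n : ℕ} (hd1 : 1 ≤ d)
    (hpathLen : ∀ E ∈ Cs, E.maxPathLen ≤ d) (hnumEx : (Cs.map Concept.numEx).sum ≤ e)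
    (hn : e * d ≤ n) (w₀ : Δ) :
    ∃ (I : Interp (List (Fin n))) (f : List (Fin n) → Δ), IsTree n I ∧ f [] = w₀ ∧
      ∀ E ∈ Cs, ∀ v, f v ∈ E.sem J → v ∈ E.sem I := by
  set R : Δ → List (Run Δ) := fun w => Cs.flatMap (witnessRuns J w)
  have hR : ∀ w, ∀ ρ ∈ R w, ρ.Valid J w := fun w ρ hρ => by
    obtain ⟨E, -, hρ⟩ := List.mem_flatMap.1 hρ
    exact (valid_and_length_le_of_mem_witnessRuns J w hρ).1
  have hRpath : ∀ w, ∀ ρ ∈ R w, ρ.path.length ≤ d := fun w ρ hρ => by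
    obtain ⟨E, hE, hρ⟩ := List.mem_flatMap.1 hρ
    exact (valid_and_length_le_of_mem_witnessRuns J w hρ).2.trans (max_le hd1 (hpathLen E hE))
  have hRlen : ∀ w, (R w).length ≤ e := fun w =>
    List.length_flatMap.trans_le
      ((List.sum_le_sum fun E _ => length_witnessRuns_le J w E).trans hnumEx)
  obtain ⟨rstar, hodd, hfresh⟩ : ∃ r, r % 2 = 1 ∧ ∀ E ∈ Cs, r ∉ E.roles :=
    ⟨2 * (Cs.flatMap Concept.roles).sum + 1, by omega, fun E hE h => by
      have := List.le_sum_of_mem (List.mem_flatMap.2 ⟨E, hE, h⟩)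
      omega⟩
  have hsteps (v : List (Fin n)) := (length_nodeSteps_nodeAt_le hRlen hRpath w₀ v).trans hn
  refine ⟨unravel J R w₀ n rstar hR hodd, fun v => (nodeAt R w₀ v).elem,
    isTree_unravel J R w₀ n rstar hR hodd, rfl, fun E hE v hv => ?_⟩
  exact mem_sem_unravel hR hodd hsteps (hnnf E hE) (hwf E hE) (hfresh E hE)
    (fun w ρ hρ => List.mem_flatMap.2 ⟨E, hE, hρ⟩) hv

theorem tree_model_property_general (C : Concept) (T : TBox)
    (hwfC : C.wf) (hwfT : ∀ ax ∈ T, ax.1.wf ∧ ax.2.wf)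
    (hnnfC : C.IsNNF)
    (hnnfT : ∀ ax ∈ T, (Concept.or' (.neg ax.1) ax.2).IsNNF)
    (d e n : ℕ)
    (hd : d = max C.maxPathLen
      ((T.map fun ax => (Concept.or' (.neg ax.1) ax.2).maxPathLen).foldr max 0))
    (he : e = C.numEx + (T.map fun ax => (Concept.or' (.neg ax.1) ax.2).numEx).sum)
    (hd1 : 1 ≤ d) (hn : n = d * e)
    (hsat : Satisfiable C T) :
    ∃ I : Interp (List (Fin n)), IsTree n I ∧ IsModel I T ∧ (Concept.sem I C).Nonempty := by
  obtain ⟨Δ, -, J, hJ, w₀, hw₀⟩ := hsat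
  set Cs := C :: T.map fun ax => Concept.or' (.neg ax.1) ax.2
  have hpathLen : ∀ E ∈ Cs, E.maxPathLen ≤ d := by
    simp only [Cs, List.forall_mem_cons, List.forall_mem_map, hd]
    exact ⟨le_max_left _ _, fun ax hax =>
      le_max_of_le_right (List.le_max_of_le (List.mem_map_of_mem hax) le_rfl)⟩
  have hnumEx : (Cs.map Concept.numEx).sum ≤ e := by simp [Cs, he, Function.comp_def]
  obtain ⟨I, f, htree, hf₀, hf⟩ := exists_isTree_unravelling J Cs
    (List.forall_mem_cons.2 ⟨hnnfC, List.forall_mem_map.2 hnnfT⟩)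
    (List.forall_mem_cons.2 ⟨hwfC, List.forall_mem_map.2 hwfT⟩) hd1 hpathLen hnumEx
    (hn ▸ (Nat.mul_comm e d).le) w₀
  refine ⟨I, htree, (isModel_iff I T).2 fun ax hax v => ?_,
    [], hf C List.mem_cons_self [] (hf₀ ▸ hw₀)⟩
  exact hf _ (List.mem_cons_of_mem _ (List.mem_map_of_mem hax)) v
    ((isModel_iff J T).1 hJ ax hax _)

/-- tree model property: if `C` and the concepts `¬C' ⊔ D'` for the
axioms `C' ⊑ D'` of `T` are in negation normal form, `d` is the maximal path
length and `e` the number of existential subconcepts occurring in them, `d, e ≥ 1`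
and `n = d·e`, then satisfiability of `C` w.r.t. `T` yields an `n`-tree model. -/
theorem tree_model_property (C : Concept) (T : TBox)
    (hwfC : C.wf) (hwfT : ∀ ax ∈ T, ax.1.wf ∧ ax.2.wf)
    (hnnfC : C.IsNNF)
    (hnnfT : ∀ ax ∈ T, (Concept.or' (.neg ax.1) ax.2).IsNNF)
    (d e n : ℕ)
    (hd : d = max C.maxPathLen
      ((T.map fun ax => (Concept.or' (.neg ax.1) ax.2).maxPathLen).foldr max 0))
    (he : e = C.numEx + (T.map fun ax => (Concept.or' (.neg ax.1) ax.2).numEx).sum)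
    (hd1 : 1 ≤ d) (he1 : 1 ≤ e) (hn : n = d * e)
    (hsat : Satisfiable C T) :
    ∃ I : Interp (List (Fin n)), IsTree n I ∧ IsModel I T ∧ (Concept.sem I C).Nonempty :=
  tree_model_property_general C T hwfC hwfT hnnfC hnnfT d e n hd he hd1 hn hsat

end ALCFPZ
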